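/- arXiv:2203.11352 — 4 statements merged into one kernel-verified Lean document; each statement's English description precedes it below -/
import Mathlib

section
/- For a two-asset constant product market maker with trading function A(x1,x2)=x1*x2=k, if initial prices are (p1i,p2i) with stable state (x1i,x2i) and final prices are (p1f,p2f) with stable state (x1f,x2f), then the impermanent loss IL = (p1f*x1f + p2f*x2f)/(p1f*x1i + p2f*x2i) - 1 equals 2*sqrt(t)/(t+1) - 1, where t = (p2f/p1f)/(p2i/p1i). -/
/-!
Writing `r = p₂ / p₁` for an exchange rate, the stable state for `r` held at prices with exchange
rate `s` is worth `√k p₁ (√r + s / √r)`. At `r = s` this is `2 √k p₁ √s`, so both values share the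
factor `√k p₁`, and the ratio `2 √s / (√r + s / √r) = 2 √(s / r) / (s / r + 1)` only depends on
`t = s / r`.
-/

open Real

lemma mul_mul_sqrt_add_mul_mul_sqrt_inv (c p₁ p₂ r : ℝ) (hp₁ : p₁ ≠ 0) :
    p₁ * (c * √r) + p₂ * (c * √r⁻¹) = c * p₁ * (√r + p₂ / p₁ / √r) := by
  rw [sqrt_inv]
  field_simp

lemma sqrt_add_div_sqrt_div_sqrt_add_div_sqrt {r s : ℝ} (hr : 0 < r) (hs : 0 < s) :
    (√s + s / √s) / (√r + s / √r) = 2 * √(s / r) / (s / r + 1) := by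
  rw [sqrt_div hs.le]
  field_simp
  rw [sq_sqrt hs.le, sq_sqrt hr.le]
  ring

/-- Impermanent loss for the two-asset constant product market maker
`x₁ * x₂ = k`: with stable states given explicitly by the Lagrange
multiplier solution, the impermanent loss equals `2√t/(t+1) - 1` where
`t` is the quotient of final and initial exchange rates. -/
theorem stmt_0 (k p1i p2i p1f p2f x1i x2i x1f x2f t : ℝ)
    (hk : 0 < k) (hp1i : 0 < p1i) (hp2i : 0 < p2i) (hp1f : 0 < p1f) (hp2f : 0 < p2f)
    (hx1i : x1i = Real.sqrt k * Real.sqrt (p2i / p1i))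
    (hx2i : x2i = Real.sqrt k * Real.sqrt (p1i / p2i))
    (hx1f : x1f = Real.sqrt k * Real.sqrt (p2f / p1f))
    (hx2f : x2f = Real.sqrt k * Real.sqrt (p1f / p2f))
    (ht : t = (p2f / p1f) / (p2i / p1i)) :
    (p1f * x1f + p2f * x2f) / (p1f * x1i + p2f * x2i) - 1
      = 2 * Real.sqrt t / (t + 1) - 1 := by
  have hscale : √k * p1f ≠ 0 := (mul_pos (sqrt_pos.2 hk) hp1f).ne'
  rw [hx1i, hx2i, hx1f, hx2f, ← inv_div p2i, ← inv_div p2f,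
    mul_mul_sqrt_add_mul_mul_sqrt_inv _ _ _ _ hp1f.ne',
    mul_mul_sqrt_add_mul_mul_sqrt_inv _ _ _ _ hp1f.ne', mul_div_mul_left _ _ hscale,
    sqrt_add_div_sqrt_div_sqrt_add_div_sqrt (by positivity) (by positivity), ← ht]
end

section
/- For an n-asset constant product market maker x1*...*xn = k with initial prices p^i and final prices p^f (all positive) and corresponding stable states x^i, x^f, the impermanent loss IL = (sum_j p_j^f x_j^f)/(sum_j p_j^f x_j^i) - 1 equals (prod_{j=1}^n t_j)^(1/n) / ((1/n) * sum_{j=1}^n t_j) - 1, where t_j = (p_j^f/p_1^f)/(p_j^i/p_1^i). -/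
/-!
At a price vector `p` every asset of the stable state carries the same value
`pⱼ xⱼ = k^(1/n) (∏ pₗ)^(1/n)`. Hence the final portfolio is worth `n` times that at the
final prices, while the initial portfolio is worth `k^(1/n) (∏ pⁱ)^(1/n) ∑ rⱼ` with
`rⱼ = pⱼᶠ / pⱼⁱ`, so the value ratio is the geometric mean of `r` over its arithmetic mean.
That ratio is invariant under scaling `r`, and `tⱼ = rⱼ / r₁`.
-/

open Finset Real

section

variable {ι : Type*} [Fintype ι]

theorem prod_const_mul_rpow_inv_card [Nonempty ι] {c : ℝ} (hc : 0 ≤ c) {t : ι → ℝ}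
    (ht : ∀ j, 0 ≤ t j) :
    (∏ j, c * t j) ^ ((1 : ℝ) / Fintype.card ι)
      = c * (∏ j, t j) ^ ((1 : ℝ) / Fintype.card ι) := by
  rw [prod_mul_distrib, prod_const, card_univ,
    mul_rpow (by positivity) (prod_nonneg fun j _ => ht j), one_div,
    pow_rpow_inv_natCast hc Fintype.card_ne_zero]

theorem geomMean_div_mean_const_mul [Nonempty ι] {c : ℝ} (hc : 0 < c) {t : ι → ℝ}
    (ht : ∀ j, 0 ≤ t j) :
    (∏ j, c * t j) ^ ((1 : ℝ) / Fintype.card ι) / ((1 / (Fintype.card ι : ℝ)) * ∑ j, c * t j)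
      = (∏ j, t j) ^ ((1 : ℝ) / Fintype.card ι) / ((1 / (Fintype.card ι : ℝ)) * ∑ j, t j) := by
  rw [prod_const_mul_rpow_inv_card hc.le ht, ← mul_sum, mul_left_comm,
    mul_div_mul_left _ _ hc.ne']

noncomputable def stableState (k : ℝ) (p : ι → ℝ) (j : ι) : ℝ :=
  k ^ ((1 : ℝ) / Fintype.card ι) * (∏ l, p l) ^ ((1 : ℝ) / Fintype.card ι) / p j

theorem sum_mul_stableState_self (k : ℝ) {p : ι → ℝ} (hp : ∀ j, p j ≠ 0) :
    ∑ j, p j * stableState k p j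
      = Fintype.card ι * (k ^ ((1 : ℝ) / Fintype.card ι)
          * (∏ l, p l) ^ ((1 : ℝ) / Fintype.card ι)) := by
  simp only [stableState, mul_div_cancel₀ _ (hp _), sum_const, card_univ, nsmul_eq_mul]

theorem sum_mul_stableState (k : ℝ) (p q : ι → ℝ) :
    ∑ j, q j * stableState k p j
      = k ^ ((1 : ℝ) / Fintype.card ι) * (∏ l, p l) ^ ((1 : ℝ) / Fintype.card ι)
          * ∑ j, q j / p j := by
  rw [mul_sum]
  exact sum_congr rfl fun j _ => by rw [stableState]; ring

theorem sum_mul_stableState_div [Nonempty ι] {k : ℝ} (hk : 0 < k) {p q : ι → ℝ}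
    (hp : ∀ j, 0 < p j) (hq : ∀ j, 0 < q j) :
    (∑ j, q j * stableState k q j) / (∑ j, q j * stableState k p j)
      = (∏ j, q j / p j) ^ ((1 : ℝ) / Fintype.card ι)
          / ((1 / (Fintype.card ι : ℝ)) * ∑ j, q j / p j) := by
  have hP : 0 < ∏ l, p l := prod_pos fun l _ => hp l
  have hQ : 0 < ∏ l, q l := prod_pos fun l _ => hq l
  have hS : 0 < ∑ j, q j / p j :=
    sum_pos (fun j _ => div_pos (hq j) (hp j)) univ_nonempty
  have hK : 0 < k ^ ((1 : ℝ) / Fintype.card ι) := rpow_pos_of_pos hk _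
  have hPn : 0 < (∏ l, p l) ^ ((1 : ℝ) / Fintype.card ι) := rpow_pos_of_pos hP _
  have hn : (0 : ℝ) < Fintype.card ι := by exact_mod_cast Fintype.card_pos
  rw [sum_mul_stableState_self k fun j => (hq j).ne', sum_mul_stableState, prod_div_distrib,
    div_rpow hQ.le hP.le]
  field_simp

end

/-- Impermanent loss for the `n`-asset constant product market maker: with
stable states given explicitly by `xⱼ = k^(1/n) (∏ pₗ)^(1/n) / pⱼ`, the
impermanent loss equals `(∏ tⱼ)^(1/n) / ((1/n) ∑ tⱼ) - 1`, where
`tⱼ = (pⱼᶠ/p₁ᶠ)/(pⱼⁱ/p₁ⁱ)`. -/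
theorem stmt_3 (n : ℕ) (hn : 0 < n) (k : ℝ) (hk : 0 < k)
    (pi pf xi xf t : Fin n → ℝ)
    (hpi : ∀ j, 0 < pi j) (hpf : ∀ j, 0 < pf j)
    (hxi : ∀ j, xi j = k ^ ((1 : ℝ) / n) * (∏ l, pi l) ^ ((1 : ℝ) / n) / pi j)
    (hxf : ∀ j, xf j = k ^ ((1 : ℝ) / n) * (∏ l, pf l) ^ ((1 : ℝ) / n) / pf j)
    (ht : ∀ j, t j = (pf j / pf ⟨0, hn⟩) / (pi j / pi ⟨0, hn⟩)) :
    (∑ j, pf j * xf j) / (∑ j, pf j * xi j) - 1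
      = (∏ j, t j) ^ ((1 : ℝ) / n) / ((1 / (n : ℝ)) * ∑ j, t j) - 1 := by
  have : Nonempty (Fin n) := ⟨⟨0, hn⟩⟩
  have hxi' : xi = stableState k pi := funext fun j => by simp [stableState, hxi]
  have hxf' : xf = stableState k pf := funext fun j => by simp [stableState, hxf]
  have ht' : t = fun j => pi ⟨0, hn⟩ / pf ⟨0, hn⟩ * (pf j / pi j) := funext fun j => by
    rw [ht j, div_div_div_comm, mul_comm, div_eq_mul_inv, inv_div]
  subst hxi' hxf' ht'
  have hratio := (geomMean_div_mean_const_mul (div_pos (hpi ⟨0, hn⟩) (hpf ⟨0, hn⟩))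
    fun j => (div_pos (hpf j) (hpi j)).le).trans (sum_mul_stableState_div hk hpi hpf).symm
  rw [Fintype.card_fin] at hratio
  rw [hratio]
end

section
/- With W(m) = min_x [m·x + f(x)] the stable portfolio value function and W_{m_j}(m) = x_j(m), the impermanent loss between exchange rate vectors m^i and m^f equals IL = W(m^f)/P(m^f) - 1, where P(m) = W(m^i) + sum_{j=1}^{n-1} (m_j - m_j^i) W_{m_j}(m^i) is the first-order Taylor (linear) approximation of W at m^i. -/
open Finset in
theorem stmt_9_general (d : ℕ) (f : (Fin d → ℝ) → ℝ)
    (X : (Fin d → ℝ) → (Fin d → ℝ))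
    (W : (Fin d → ℝ) → ℝ)
    (hW : ∀ p, W p = (∑ j, p j * X p j) + f (X p))
    (mi mf : Fin d → ℝ) :
    ((∑ j, mf j * X mf j) + f (X mf)) / ((∑ j, mf j * X mi j) + f (X mi)) - 1
      = W mf / (W mi + ∑ j, (mf j - mi j) * X mi j) - 1 := by
  have hold_value_eq_linear_approx :
      W mi + ∑ j, (mf j - mi j) * X mi j = (∑ j, mf j * X mi j) + f (X mi) := by
    simp only [hW, sub_mul, sum_sub_distrib]
    ring
  rw [hold_value_eq_linear_approx, hW mf]

open Finset in
/-- Impermanent loss in terms of the stable portfolio value function `W`: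
with `x_n(m) = f(x(m))`, `m_n = 1`, and `W(m) = m·x(m) + f(x(m))`, the
impermanent loss equals `W(m^f)/P(m^f) - 1` where
`P(m) = W(m^i) + ∑ (m_j - m^i_j) W_{m_j}(m^i)` is the linear approximation
of `W` at `m^i` (using `W_{m_j}(m^i) = x_j(m^i)`). -/
theorem stmt_9 (d : ℕ) (f : (Fin d → ℝ) → ℝ)
    (X : (Fin d → ℝ) → (Fin d → ℝ))
    (W : (Fin d → ℝ) → ℝ)
    (hW : ∀ p, W p = (∑ j, p j * X p j) + f (X p))
    (mi mf : Fin d → ℝ) (hmi : ∀ j, 0 < mi j) (hmf : ∀ j, 0 < mf j) :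
    ((∑ j, mf j * X mf j) + f (X mf)) / ((∑ j, mf j * X mi j) + f (X mi)) - 1
      = W mf / (W mi + ∑ j, (mf j - mi j) * X mi j) - 1 :=
  stmt_9_general d f X W hW mi mf
end

section
/- Let f : R_{>0}^{n-1} -> R_{>0} be strictly convex and suppose f is homogeneous of degree alpha_j in its j-th variable separately, for each j (i.e., f(x_1,...,c x_j,...,x_{n-1}) = c^{alpha_j} f(x)). Define W(m) = min_{x>0} [m·x + f(x)]. Then W is homogeneous of degree beta_j in m_j separately, where beta_j = alpha_j / (-1 + sum_{i=1}^{n-1} alpha_i). -/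
/-!
Scaling `mⱼ` by `c` and the whole minimiser by `c ^ βⱼ`, except its `j`-th coordinate, which is
scaled by `c ^ (βⱼ - 1)`, scales both `m · x` and `f x` by `c ^ βⱼ`: this is exactly what
`βⱼ (∑ αᵢ - 1) = αⱼ` says. Hence `W (c ⬝ⱼ m) ≤ c ^ βⱼ W m`, and the same bound for `c⁻¹` gives
equality. Strict convexity is needed only to exclude `∑ αᵢ = 1`, where `f` is linear on the
diagonal.
-/

open Finset

theorem update_mul_pos {ι : Type*} [DecidableEq ι] {p : ι → ℝ} (hp : ∀ l, 0 < p l) (j : ι)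
    {c : ℝ} (hc : 0 < c) (l : ι) : 0 < Function.update p j (c * p j) l := by
  rcases eq_or_ne l j with rfl | hl
  · simpa using mul_pos hc (hp l)
  · simpa [hl] using hp l

theorem update_mul_eq_rpow_mul_of_le {ι : Type*} [DecidableEq ι] {g : (ι → ℝ) → ℝ} {β : ℝ}
    {j : ι} (hle : ∀ q : ι → ℝ, (∀ l, 0 < q l) → ∀ e : ℝ, 0 < e →
      g (Function.update q j (e * q j)) ≤ e ^ β * g q)
    {c : ℝ} (hc : 0 < c) {p : ι → ℝ} (hp : ∀ l, 0 < p l) :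
    g (Function.update p j (c * p j)) = c ^ β * g p := by
  have hback := hle _ (update_mul_pos hp j hc) c⁻¹ (inv_pos.2 hc)
  rw [Function.update_self, Function.update_idem, inv_mul_cancel_left₀ hc.ne',
    Function.update_eq_self, Real.inv_rpow hc.le, le_inv_mul_iff₀ (by positivity)] at hback
  exact (hle p hp c hc).antisymm hback

section CoordinateHomogeneous

variable {ι : Type*} [Fintype ι] [DecidableEq ι] {f : (ι → ℝ) → ℝ} {α : ι → ℝ}
  (hfhom : ∀ j, ∀ c : ℝ, 0 < c → ∀ x : ι → ℝ, (∀ l, 0 < x l) →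
    f (Function.update x j (c * x j)) = c ^ (α j) * f x)
include hfhom

theorem apply_mul_eq_prod_rpow_mul {t x : ι → ℝ} (ht : ∀ l, 0 < t l) (hx : ∀ l, 0 < x l) :
    f (t * x) = (∏ l, t l ^ α l) * f x := by
  suffices ∀ S : Finset ι, f (S.piecewise (t * x) x) = (∏ l ∈ S, t l ^ α l) * f x by
    simpa using this univ
  intro S
  induction S using Finset.induction_on with
  | empty => simp
  | @insert a S haS ih =>
    have hpos : ∀ l, 0 < S.piecewise (t * x) x l := fun l => by
      by_cases hl : l ∈ S <;> simp [hl, mul_pos (ht l) (hx l), hx l]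
    have hxa : S.piecewise (t * x) x a = x a := S.piecewise_eq_of_notMem _ _ haS
    rw [piecewise_insert, Pi.mul_apply, ← hxa, hfhom a (t a) (ht a) _ hpos, ih,
      prod_insert haS, mul_assoc]

theorem sum_ne_one_of_strictConvexOn [Nonempty ι]
    (hfconv : StrictConvexOn ℝ {x : ι → ℝ | ∀ j, 0 < x j} f) :
    ∑ i, α i ≠ 1 := by
  intro hsum
  have hdiag : ∀ c : ℝ, 0 < c → f (fun _ => c) = c * f 1 := fun c hc => by
    have h := apply_mul_eq_prod_rpow_mul (t := fun _ => c) (x := 1) hfhom (fun _ => hc)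
      (fun _ => one_pos)
    rwa [mul_one, ← Real.rpow_sum_of_pos hc, hsum, Real.rpow_one] at h
  have hne : (fun _ => 1 : ι → ℝ) ≠ fun _ => 3 := fun h => by
    simpa using congrFun h (Classical.arbitrary ι)
  have hlt := hfconv.2 (fun _ => one_pos) (fun _ => three_pos) hne
    one_half_pos one_half_pos (add_halves 1)
  have hmid : (1 / 2 : ℝ) • (fun _ => 1 : ι → ℝ) + (1 / 2 : ℝ) • (fun _ => 3) = fun _ => 2 := by
    ext; norm_num
  rw [hmid, hdiag 2 two_pos, hdiag 1 one_pos, hdiag 3 three_pos] at hlt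
  simp only [smul_eq_mul] at hlt
  linarith

variable {X : (ι → ℝ) → ι → ℝ} {W : (ι → ℝ) → ℝ}
  (hXpos : ∀ p, (∀ j, 0 < p j) → ∀ j, 0 < X p j)
  (hmin : ∀ p, (∀ j, 0 < p j) → ∀ y : ι → ℝ, (∀ j, 0 < y j) →
    (∑ j, p j * X p j) + f (X p) ≤ (∑ j, p j * y j) + f y)
  (hW : ∀ p, W p = (∑ j, p j * X p j) + f (X p))
include hXpos hmin hW

/-- `t * X q` is a competitor for `m` whose cost is `lam * W q`. -/
theorem le_mul_of_mul_eq_mul_of_prod_rpow_eq {m q t : ι → ℝ} {lam : ℝ}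
    (hm : ∀ l, 0 < m l) (hq : ∀ l, 0 < q l) (ht : ∀ l, 0 < t l)
    (hmt : ∀ l, m l * t l = lam * q l) (hprod : ∏ l, t l ^ α l = lam) :
    W m ≤ lam * W q := by
  calc W m ≤ (∑ l, m l * (t * X q) l) + f (t * X q) :=
        hW m ▸ hmin m hm _ fun l => mul_pos (ht l) (hXpos q hq l)
    _ = lam * W q := by
      rw [apply_mul_eq_prod_rpow_mul hfhom ht (hXpos q hq), hprod, hW q, mul_add, mul_sum]
      congr 1
      refine sum_congr rfl fun l _ => ?_
      rw [Pi.mul_apply, ← mul_assoc, hmt l, mul_assoc]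

theorem update_mul_le_rpow_mul (hs : -1 + ∑ i, α i ≠ 0) (j : ι) {q : ι → ℝ}
    (hq : ∀ l, 0 < q l) {e : ℝ} (he : 0 < e) :
    W (Function.update q j (e * q j)) ≤ e ^ (α j / (-1 + ∑ i, α i)) * W q := by
  set β := α j / (-1 + ∑ i, α i)
  have hβ : β * ∑ i, α i - α j = β := by
    linear_combination div_mul_cancel₀ (α j) hs
  refine le_mul_of_mul_eq_mul_of_prod_rpow_eq hfhom hXpos hmin hW
    (t := fun l => e ^ (β - (Pi.single j 1 : ι → ℝ) l)) (update_mul_pos hq j he) hq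
    (fun l => Real.rpow_pos_of_pos he _) (fun l => ?_) ?_
  · rcases eq_or_ne l j with rfl | hl
    · rw [Function.update_self, Pi.single_eq_same, Real.rpow_sub_one he.ne']
      field_simp
    · rw [Function.update_of_ne hl, Pi.single_eq_of_ne hl, sub_zero, mul_comm]
  · simp_rw [← Real.rpow_mul he.le, ← Real.rpow_sum_of_pos he]
    congr 1
    simpa [sub_mul, sum_sub_distrib, ← mul_sum, Pi.single_apply] using hβ

end CoordinateHomogeneous

open Finset in
theorem stmt_11_general (d : ℕ) (f : (Fin d → ℝ) → ℝ) (α : Fin d → ℝ)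
    (hfconv : StrictConvexOn ℝ {x : Fin d → ℝ | ∀ j, 0 < x j} f)
    (hfhom : ∀ j, ∀ c : ℝ, 0 < c → ∀ x : Fin d → ℝ, (∀ l, 0 < x l) →
      f (Function.update x j (c * x j)) = c ^ (α j) * f x)
    (X : (Fin d → ℝ) → (Fin d → ℝ))
    (hXpos : ∀ p, (∀ j, 0 < p j) → ∀ j, 0 < X p j)
    (hmin : ∀ p, (∀ j, 0 < p j) → ∀ y : Fin d → ℝ, (∀ j, 0 < y j) →
      (∑ j, p j * X p j) + f (X p) ≤ (∑ j, p j * y j) + f y)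
    (W : (Fin d → ℝ) → ℝ)
    (hW : ∀ p, W p = (∑ j, p j * X p j) + f (X p)) :
    ∀ j, ∀ c : ℝ, 0 < c → ∀ p : Fin d → ℝ, (∀ l, 0 < p l) →
      W (Function.update p j (c * p j))
        = c ^ (α j / (-1 + ∑ i, α i)) * W p := by
  intro j c hc p hp
  have : Nonempty (Fin d) := ⟨j⟩
  have hs : -1 + ∑ i, α i ≠ 0 := fun h =>
    sum_ne_one_of_strictConvexOn hfhom hfconv (by linarith)
  exact update_mul_eq_rpow_mul_of_le
    (fun q hq e he => update_mul_le_rpow_mul hfhom hXpos hmin hW hs j hq he) hc hp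

open Finset in
/-- If `f` is strictly convex and homogeneous of degree `αⱼ` in each single
coordinate `xⱼ`, then `W(m) = min_{x>0} [m·x + f(x)]` is homogeneous of degree
`βⱼ = αⱼ/(-1 + ∑ αᵢ)` in each single coordinate `mⱼ`. -/
theorem stmt_11 (d : ℕ) (f : (Fin d → ℝ) → ℝ) (α : Fin d → ℝ)
    (hfpos : ∀ x : Fin d → ℝ, (∀ j, 0 < x j) → 0 < f x)
    (hfconv : StrictConvexOn ℝ {x : Fin d → ℝ | ∀ j, 0 < x j} f)
    (hfhom : ∀ j, ∀ c : ℝ, 0 < c → ∀ x : Fin d → ℝ, (∀ l, 0 < x l) →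
      f (Function.update x j (c * x j)) = c ^ (α j) * f x)
    (X : (Fin d → ℝ) → (Fin d → ℝ))
    (hXpos : ∀ p, (∀ j, 0 < p j) → ∀ j, 0 < X p j)
    (hmin : ∀ p, (∀ j, 0 < p j) → ∀ y : Fin d → ℝ, (∀ j, 0 < y j) →
      (∑ j, p j * X p j) + f (X p) ≤ (∑ j, p j * y j) + f y)
    (W : (Fin d → ℝ) → ℝ)
    (hW : ∀ p, W p = (∑ j, p j * X p j) + f (X p)) :
    ∀ j, ∀ c : ℝ, 0 < c → ∀ p : Fin d → ℝ, (∀ l, 0 < p l) →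
      W (Function.update p j (c * p j))
        = c ^ (α j / (-1 + ∑ i, α i)) * W p :=
  stmt_11_general d f α hfconv hfhom X hXpos hmin W hW
end
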